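/- arXiv:1606.04278 — 5 statements merged into one kernel-verified Lean document; each statement's English description precedes it below -/
import Mathlib

section
/- (Correctness of the threshold stopping criterion) With the setup of the threshold algorithm, suppose C ⊆ Y is the set of targets encountered up to depth d (i.e., every y ∉ C satisfies L_r⁻¹(y) > d for all r), and suppose S ⊆ C with |S| = K is such that for every y' ∈ S, s(x,y') ≥ upperBound(d) := Σ_r u_r(x)·t_r(L_r(d)). Then min_{y'∈S} s(x,y') ≥ s(x,y) for all y ∉ C, and if additionally S contains the K largest scores among C, then s(x,y') ≥ s(x,y) for all y' ∈ S and y ∉ S, i.e., S is a valid top-K set. -/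
/-- Correctness of the threshold stopping criterion. -/
theorem stmt_4 (R M K : ℕ) (hR : 0 < R) (hM : 0 < M)
    (t : Fin R → Fin M → ℝ) (u : Fin R → ℝ) (hu : ∀ r, 0 ≤ u r)
    (L : Fin R → (Fin M ≃ Fin M))
    (hsorted : ∀ r, ∀ i j : Fin M, i ≤ j → t r (L r j) ≤ t r (L r i))
    (d : Fin M) (C S : Finset (Fin M))
    (hC : ∀ y : Fin M, y ∉ C → ∀ r, d < (L r).symm y)
    (hSC : S ⊆ C) (hScard : S.card = K)
    (hstop : ∀ y' ∈ S, (∑ r, u r * t r (L r d)) ≤ ∑ r, u r * t r y') :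
    (∀ y : Fin M, y ∉ C → ∀ y' ∈ S, ∑ r, u r * t r y ≤ ∑ r, u r * t r y') ∧
    ((∀ y ∈ C, y ∉ S → ∀ y' ∈ S, ∑ r, u r * t r y ≤ ∑ r, u r * t r y') →
      ∀ y' ∈ S, ∀ y : Fin M, y ∉ S → ∑ r, u r * t r y ≤ ∑ r, u r * t r y') := by
  have key : ∀ y : Fin M, y ∉ C → ∀ y' ∈ S, ∑ r, u r * t r y ≤ ∑ r, u r * t r y' := by
    intro y hy y' hy'
    have h1 : (∑ r, u r * t r y) ≤ ∑ r, u r * t r (L r d) := by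
      apply Finset.sum_le_sum
      intro r _
      apply mul_le_mul_of_nonneg_left _ (hu r)
      have := hsorted r d ((L r).symm y) (le_of_lt (hC y hy r))
      simpa using this
    exact h1.trans (hstop y' hy')
  refine ⟨key, ?_⟩
  intro h y' hy' y hy
  by_cases hyC : y ∈ C
  · exact h y hyC hy y' hy'
  · exact key y hyC y' hy'
end

section
/- (Fagin's algorithm correctness) Suppose each list L_r is an enumeration of the M targets decreasing in t_r, all weights u_r ≥ 0, and d is a depth at which at least K targets appear in the top d positions of every list (i.e., |{y : ∀ r, L_r⁻¹(y) ≤ d}| ≥ K). Let C = {y : ∃ r, L_r⁻¹(y) ≤ d} be all targets seen in the top d positions of some list. Then for any target y ∉ C and any target y* that appears in the top d positions of every list, s(x, y*) ≥ s(x, y). Consequently the K highest-scoring elements of C form a valid top-K set over all M targets. -/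
/-- Fagin's algorithm correctness: once at least `K` targets are seen in the top `d`
positions of every list, any target seen in all lists dominates all unseen targets, and the
`K` best of all encountered targets form a valid top-`K` set. -/
theorem stmt_6 (R M K : ℕ) (hR : 0 < R) (hKM : K ≤ M)
    (t : Fin R → Fin M → ℝ) (u : Fin R → ℝ) (hu : ∀ r, 0 ≤ u r)
    (L : Fin R → (Fin M ≃ Fin M))
    (hsorted : ∀ r, ∀ i j : Fin M, i ≤ j → t r (L r j) ≤ t r (L r i))
    (d : Fin M)
    (hK : K ≤ (Finset.univ.filter fun y : Fin M => ∀ r, (L r).symm y ≤ d).card) :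
    (∀ y : Fin M, y ∉ (Finset.univ.filter fun y : Fin M => ∃ r, (L r).symm y ≤ d) →
      ∀ y' : Fin M, (∀ r, (L r).symm y' ≤ d) → ∑ r, u r * t r y ≤ ∑ r, u r * t r y') ∧
    (∀ S : Finset (Fin M),
      S ⊆ (Finset.univ.filter fun y : Fin M => ∃ r, (L r).symm y ≤ d) → S.card = K →
      (∀ y ∈ (Finset.univ.filter fun y : Fin M => ∃ r, (L r).symm y ≤ d), y ∉ S →
        ∀ y' ∈ S, ∑ r, u r * t r y ≤ ∑ r, u r * t r y') →
      ∀ y' ∈ S, ∀ y : Fin M, y ∉ S → ∑ r, u r * t r y ≤ ∑ r, u r * t r y') := by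
  have part1 : ∀ y : Fin M,
      y ∉ (Finset.univ.filter fun y : Fin M => ∃ r, (L r).symm y ≤ d) →
      ∀ y' : Fin M, (∀ r, (L r).symm y' ≤ d) →
      ∑ r, u r * t r y ≤ ∑ r, u r * t r y' := by
    intro y hy y' hy'
    simp only [Finset.mem_filter, Finset.mem_univ, true_and, not_exists] at hy
    refine Finset.sum_le_sum fun r _ => mul_le_mul_of_nonneg_left ?_ (hu r)
    have h1 : (L r).symm y' ≤ (L r).symm y :=
      le_trans (hy' r) (le_of_not_ge (hy r))
    have := hsorted r _ _ h1
    simpa using this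
  refine ⟨part1, ?_⟩
  intro S hSC hScard hdom y' hy' y hyS
  by_cases hyC : y ∈ (Finset.univ.filter fun y : Fin M => ∃ r, (L r).symm y ≤ d)
  · exact hdom y hyC hyS y' hy'
  · set A := (Finset.univ.filter fun y : Fin M => ∀ r, (L r).symm y ≤ d) with hA
    by_cases hAS : A ⊆ S
    · have : A = S := Finset.eq_of_subset_of_card_le hAS (hScard ▸ hK)
      have hy'A : y' ∈ A := this ▸ hy'
      simp only [hA, Finset.mem_filter, Finset.mem_univ, true_and] at hy'A
      exact part1 y hyC y' hy'A
    · obtain ⟨z, hzA, hzS⟩ := Finset.not_subset.mp hAS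
      have hzA' : ∀ r, (L r).symm z ≤ d := by
        simpa [hA, Finset.mem_filter] using hzA
      have hzC : z ∈ (Finset.univ.filter fun y : Fin M => ∃ r, (L r).symm y ≤ d) := by
        simp only [Finset.mem_filter, Finset.mem_univ, true_and]
        exact ⟨⟨0, hR⟩, hzA' _⟩
      exact le_trans (part1 y hyC z hzA') (hdom z hzC hzS y' hy')
end

section
/- (Threshold never scores more than Fagin) Under the common setup (nonnegative weights, lists sorted decreasingly), let d_F be the smallest depth at which some target appears in the top d_F positions of all R lists (Fagin's stopping depth for K = 1), and let d_T be the smallest depth d at which there exists an encountered target y* (appearing in the top d positions of some list) with s(x, y*) ≥ Σ_r u_r·t_r(L_r(d)) (the threshold algorithm's stopping depth for K = 1). Then d_T ≤ d_F. -/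
/-- The threshold algorithm never scans deeper than Fagin's algorithm (for `K = 1`):
its stopping depth `dT` is at most any depth `dF` at which some target has been seen in
the top positions of all `R` lists. -/
theorem stmt_7 (R M : ℕ) (hR : 0 < R) (hM : 0 < M)
    (t : Fin R → Fin M → ℝ) (u : Fin R → ℝ) (hu : ∀ r, 0 ≤ u r)
    (L : Fin R → (Fin M ≃ Fin M))
    (hsorted : ∀ r, ∀ i j : Fin M, i ≤ j → t r (L r j) ≤ t r (L r i))
    (dF dT : Fin M)
    (hdF : ∃ y : Fin M, ∀ r, (L r).symm y ≤ dF)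
    (hdT : IsLeast {d : Fin M | ∃ y : Fin M, (∃ r, (L r).symm y ≤ d) ∧
      (∑ r, u r * t r (L r d)) ≤ ∑ r, u r * t r y} dT) :
    dT ≤ dF := by
  obtain ⟨y, hy⟩ := hdF
  apply hdT.2
  refine ⟨y, ⟨⟨⟨0, hR⟩, hy _⟩, ?_⟩⟩
  apply Finset.sum_le_sum
  intro r _
  apply mul_le_mul_of_nonneg_left _ (hu r)
  have := hsorted r ((L r).symm y) dF (hy r)
  simpa using this
end

section
/- (Fagin is not instance-optimal: linear vs constant stopping depth) For every even M ≥ 4 there exists a dataset with R = 2, t_1, t_2 : Fin M → ℝ and query weights u = (1,1) such that: (a) the unique targets achieving the maximum score are the first and last items with score 1.1 while all others score 1.0; (b) the smallest depth at which some target appears in the top d positions of both sorted lists is M/2; but (c) at depth 2 the threshold upper bound t_1(L_1(2)) + t_2(L_2(2)) = 1.0 is already below the best score 1.1 seen at depth 1, so the threshold stopping depth is at most 2. -/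
/-!
Grade the items `1.1, 0.5, …, 0.5, 0` in the first list and by the mirror image in the second.
The two targets then sit at opposite ends of the lists, and the item at position `i` of one list
is at position `M - 1 - i` of the other, so no item reaches the top `d + 1` of both lists before
`d = max i (M - 1 - i) ≥ ⌊M / 2⌋`. Yet at depth `1` both lists show a middle grade `0.5`, so the
threshold `1` is already below the score `1.1` of the first item seen.
-/

namespace FaginExample

noncomputable def grade (M : ℕ) (i : Fin M) : ℝ :=
  if (i : ℕ) = 0 then 1.1 else if (i : ℕ) = M - 1 then 0 else 0.5

theorem grade_antitone (M : ℕ) : Antitone (grade M) := by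
  intro i j hij
  have hij' : (i : ℕ) ≤ j := hij
  have hj := j.isLt
  unfold grade
  split_ifs <;> norm_num <;> omega

theorem grade_add_grade_rev {M : ℕ} (hM : 1 < M) (i : Fin M) :
    grade M i + grade M i.rev = if (i : ℕ) = 0 ∨ (i : ℕ) = M - 1 then 1.1 else 1 := by
  have hi := i.isLt
  simp only [grade, Fin.val_rev]
  split_ifs <;> norm_num <;> omega

theorem grade_one {M : ℕ} (hM : 2 < M) : grade M ⟨1, by omega⟩ = 0.5 := by
  simp only [grade]
  rw [if_neg one_ne_zero, if_neg (by omega)]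

theorem isLeast_depth_mem_both_rev {M : ℕ} (hM : 0 < M) :
    IsLeast {d : ℕ | ∃ i : Fin M, (i : ℕ) ≤ d ∧ (i.rev : ℕ) ≤ d} (M / 2) := by
  refine ⟨⟨⟨M / 2, by omega⟩, le_rfl, ?_⟩, ?_⟩
  · simp only [Fin.val_rev]
    omega
  · rintro d ⟨i, hi, hi_rev⟩
    rw [Fin.val_rev] at hi_rev
    omega

end FaginExample

open FaginExample in
/-- Fagin is not instance-optimal: for every even `M ≥ 4` there is a dataset with `R = 2`
and weights `(1,1)` where Fagin's stopping depth is `M / 2` (linear in `M`) while the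
threshold upper bound already drops below the best seen score at (0-based) depth 1. -/
theorem stmt_8 (M : ℕ) (hM : 4 ≤ M) :
    ∃ (t₁ t₂ : Fin M → ℝ) (L₁ L₂ : Fin M ≃ Fin M),
      -- lists sorted decreasingly
      (∀ i j : Fin M, i ≤ j → t₁ (L₁ j) ≤ t₁ (L₁ i)) ∧
      (∀ i j : Fin M, i ≤ j → t₂ (L₂ j) ≤ t₂ (L₂ i)) ∧
      -- (a) scores: first and last items uniquely achieve the maximum 1.1, others score 1.0
      (t₁ ⟨0, by omega⟩ + t₂ ⟨0, by omega⟩ = 1.1) ∧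
      (t₁ ⟨M - 1, by omega⟩ + t₂ ⟨M - 1, by omega⟩ = 1.1) ∧
      (∀ i : Fin M, (i : ℕ) ≠ 0 → (i : ℕ) ≠ M - 1 → t₁ i + t₂ i = 1) ∧
      (∀ i : Fin M, t₁ i + t₂ i ≤ 1.1) ∧
      -- (b) smallest depth at which some target appears in the top positions of both lists
      IsLeast {d : ℕ | ∃ i : Fin M, ((L₁.symm i : ℕ) ≤ d ∧ (L₂.symm i : ℕ) ≤ d)} (M / 2) ∧
      -- (c) at depth 1 the threshold upper bound equals 1.0, below the best score 1.1 seen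
      -- at depth 0, so the threshold stopping depth is at most 1 (0-based)
      (t₁ (L₁ ⟨1, by omega⟩) + t₂ (L₂ ⟨1, by omega⟩) = 1) ∧
      (t₁ (L₁ ⟨1, by omega⟩) + t₂ (L₂ ⟨1, by omega⟩) <
        t₁ (L₁ ⟨0, by omega⟩) + t₂ (L₁ ⟨0, by omega⟩)) := by
  have hM1 : 1 < M := by omega
  have hmid : grade M ⟨1, by omega⟩ + grade M ⟨1, by omega⟩ = 1 := by
    rw [grade_one (by omega)]; norm_num
  refine ⟨grade M, grade M ∘ Fin.rev, Equiv.refl _, Fin.revPerm, fun i j hij => grade_antitone M hij,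
    fun i j hij => by simpa using grade_antitone M hij, ?_, ?_, ?_, ?_, ?_, ?_, ?_⟩
  · simp [grade_add_grade_rev hM1]
  · simp [grade_add_grade_rev hM1]
  · intro i hi₀ hi_last
    simp [grade_add_grade_rev hM1, hi₀, hi_last]
  · intro i
    simp only [Function.comp_apply, grade_add_grade_rev hM1]
    split_ifs <;> norm_num
  · simpa using isLeast_depth_mem_both_rev (by omega : 0 < M)
  · simpa using hmid
  · simp only [Equiv.refl_apply, Fin.revPerm_apply, Function.comp_apply, Fin.rev_rev, hmid,
      grade_add_grade_rev hM1, true_or, if_true]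
    norm_num
end

section
/- (Instance-dependent lower bound: no wild-guess algorithm can stop before the threshold depth) Fix nonnegative weights u_r, sorted lists L_r, and a depth d such that upperBound(d) = Σ_r u_r·t_r(L_r(d)) > max over encountered targets (those in the top d of some list) of s(x,·). Then there exists an alternative feature assignment t' agreeing with t on all targets encountered up to depth d and consistent with the sorted lists up to depth d, under which some unencountered target y₀ achieves score s'(x,y₀) = upperBound(d) > every encountered score. Hence no deterministic algorithm that has only read the lists to depth d and scored only encountered targets can correctly output a top-1 set. -/
/-- Cycle permutation of `Fin M`: sends `e ↦ p`, `i ↦ i-1` for `e < i ≤ p`, fixes the rest. -/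
def cycEquiv (M e p : ℕ) (hp : p < M) (he : e ≤ p) : Fin M ≃ Fin M where
  toFun i := if i.val = e then ⟨p, hp⟩
    else if h : e < i.val ∧ i.val ≤ p then ⟨i.val - 1, by omega⟩ else i
  invFun j := if j.val = p then ⟨e, lt_of_le_of_lt he hp⟩
    else if h : e ≤ j.val ∧ j.val < p then ⟨j.val + 1, by omega⟩ else j
  left_inv i := by
    apply Fin.ext
    dsimp only
    split_ifs <;> simp_all [Fin.ext_iff] <;> omega
  right_inv j := by
    apply Fin.ext
    dsimp only
    split_ifs <;> simp_all [Fin.ext_iff] <;> omega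

lemma cycEquiv_val (M e p : ℕ) (hp : p < M) (he : e ≤ p) (i : Fin M) :
    ((cycEquiv M e p hp he) i).val =
      if i.val = e then p else if e < i.val ∧ i.val ≤ p then i.val - 1 else i.val := by
  simp only [cycEquiv, Equiv.coe_fn_mk]
  split_ifs <;> rfl


/-- Instance-dependent lower bound: if the threshold upper bound at depth `d` still exceeds
every encountered score, then there is an alternative feature assignment, agreeing with the
data on all encountered targets and with the sorted lists up to depth `d`, under which some
unencountered target attains the upper bound and beats every encountered target. -/
theorem stmt_16 (R M : ℕ) (hR : 0 < R) (hM : 0 < M)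
    (t : Fin R → Fin M → ℝ) (u : Fin R → ℝ) (hu : ∀ r, 0 ≤ u r)
    (L : Fin R → (Fin M ≃ Fin M))
    (hsorted : ∀ r, ∀ i j : Fin M, i ≤ j → t r (L r j) ≤ t r (L r i))
    (d : Fin M) (C : Finset (Fin M))
    (hC : ∀ y : Fin M, y ∈ C ↔ ∃ r, (L r).symm y ≤ d)
    (hgap : ∀ y ∈ C, ∑ r, u r * t r y < ∑ r, u r * t r (L r d))
    (hunseen : ∃ y₀ : Fin M, y₀ ∉ C) :
    ∃ (t' : Fin R → Fin M → ℝ) (L' : Fin R → (Fin M ≃ Fin M)) (y₀ : Fin M),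
      y₀ ∉ C ∧
      (∀ r, ∀ y ∈ C, t' r y = t r y) ∧
      (∀ r, ∀ i : Fin M, i ≤ d → L' r i = L r i) ∧
      (∀ r, ∀ i j : Fin M, i ≤ j → t' r (L' r j) ≤ t' r (L' r i)) ∧
      (∑ r, u r * t' r y₀ = ∑ r, u r * t r (L r d)) ∧
      (∀ y ∈ C, ∑ r, u r * t' r y < ∑ r, u r * t' r y₀) := by
  obtain ⟨y₀, hy₀⟩ := hunseen
  -- y₀ sits strictly below depth d in every list
  have hpos : ∀ r, (d : ℕ) < (((L r).symm y₀ : Fin M) : ℕ) := by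
    intro r
    by_contra h
    push_neg at h
    exact hy₀ ((hC y₀).mpr ⟨r, h⟩)
  have hdM : (d : ℕ) + 1 < M := by
    have h1 := hpos ⟨0, hR⟩
    have h2 := ((L ⟨0, hR⟩).symm y₀).isLt
    omega
  set e : ℕ := (d : ℕ) + 1 with he_def
  have hpM : ∀ r, (((L r).symm y₀ : Fin M) : ℕ) < M := fun r => ((L r).symm y₀).isLt
  have hep : ∀ r, e ≤ (((L r).symm y₀ : Fin M) : ℕ) := fun r => hpos r
  set σ : ∀ _ : Fin R, Fin M ≃ Fin M :=
    fun r => cycEquiv M e (((L r).symm y₀ : Fin M) : ℕ) (hpM r) (hep r) with hσ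
  set L' : Fin R → Fin M ≃ Fin M := fun r => (σ r).trans (L r) with hL'
  set t' : Fin R → Fin M → ℝ := fun r y => if y = y₀ then t r (L r d) else t r y with ht'
  have ht'C : ∀ r, ∀ y ∈ C, t' r y = t r y := by
    intro r y hy
    have : y ≠ y₀ := fun h => hy₀ (h ▸ hy)
    simp [ht', this]
  have ht'y₀ : ∀ r, t' r y₀ = t r (L r d) := by intro r; simp [ht']
  -- the special position e
  have hLe : ∀ r, L' r ⟨e, hdM⟩ = y₀ := by
    intro r
    have hv : ((σ r) ⟨e, hdM⟩ : ℕ) = (((L r).symm y₀ : Fin M) : ℕ) := by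
      rw [hσ, cycEquiv_val]; simp
    have : (σ r) ⟨e, hdM⟩ = (L r).symm y₀ := Fin.ext hv
    simp [hL', Equiv.trans_apply, this]
  have hL'ne : ∀ r, ∀ i : Fin M, i ≠ ⟨e, hdM⟩ → L' r i ≠ y₀ := by
    intro r i hi h
    exact hi ((L' r).injective (h.trans (hLe r).symm))
  refine ⟨t', L', y₀, hy₀, ht'C, ?_, ?_, ?_, ?_⟩
  · -- list prefix agreement
    intro r i hid
    have hid' : (i : ℕ) ≤ (d : ℕ) := hid
    have hv : ((σ r) i : ℕ) = (i : ℕ) := by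
      rw [hσ, cycEquiv_val]
      have := hep r
      split_ifs <;> omega
    have : (σ r) i = i := Fin.ext hv
    simp [hL', Equiv.trans_apply, this]
  · -- sortedness of t' along L'
    intro r i j hij
    -- effective index
    set ρ : Fin M → Fin M := fun i => if i = ⟨e, hdM⟩ then d else (σ r) i with hρ
    have key : ∀ i : Fin M, t' r (L' r i) = t r (L r (ρ i)) := by
      intro i
      by_cases h : i = ⟨e, hdM⟩
      · subst h
        rw [hLe r, ht'y₀ r, hρ]
        simp
      · have hne : (L r) ((σ r) i) ≠ y₀ := by
          simpa [hL', Equiv.trans_apply] using hL'ne r i h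
        rw [hρ]
        simp only [if_neg h]
        simp [ht', hL', Equiv.trans_apply, hne]
    have hmono : ρ i ≤ ρ j := by
      have hij' : (i : ℕ) ≤ (j : ℕ) := hij
      have hpe := hep r
      have hval : ∀ k : Fin M, (ρ k : ℕ) =
          if (k : ℕ) = e then (d : ℕ)
          else if e < (k : ℕ) ∧ (k : ℕ) ≤ (((L r).symm y₀ : Fin M) : ℕ) then (k : ℕ) - 1
          else (k : ℕ) := by
        intro k
        by_cases hk : k = ⟨e, hdM⟩
        · subst hk
          rw [hρ]
          simp
        · have hk' : (k : ℕ) ≠ e := fun hh => hk (Fin.ext hh)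
          rw [hρ]
          simp only [if_neg hk, if_neg hk', hσ]
          rw [cycEquiv_val]
          rw [if_neg hk']
      rw [Fin.le_def, hval i, hval j]
      split_ifs <;> omega
    rw [key i, key j]
    exact hsorted r _ _ hmono
  · -- score of y₀ equals the upper bound
    exact Finset.sum_congr rfl fun r _ => by rw [ht'y₀ r]
  · -- y₀ beats every encountered target
    intro y hy
    have h1 : ∑ r, u r * t' r y = ∑ r, u r * t r y :=
      Finset.sum_congr rfl fun r _ => by rw [ht'C r y hy]
    have h2 : ∑ r, u r * t' r y₀ = ∑ r, u r * t r (L r d) :=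
      Finset.sum_congr rfl fun r _ => by rw [ht'y₀ r]
    rw [h1, h2]
    exact hgap y hy
end
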